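/- For any 2-database 2-message private information retrieval code (N = K = 2) satisfying the symmetry relations (which hold without loss of optimality), there exist random variables X_1, X_2, X_3, each a deterministic function of S_1, and Y_1, Y_2, each a deterministic function of S_2, each obtained as an answer A_n^{(q)} for some fixed query q, such that H(W_1 | X_1, Y_1) = 0, H(W_2 | X_1, Y_2) = 0, H(W_2 | X_2, Y_1) = 0, H(W_1 | X_3, Y_2) = 0, and H(X_1, X_2, X_3, Y_1, Y_2 | W_1, W_2) = 0; moreover α·L log₂|X| ≥ H(X_1, X_2, X_3), α·L log₂|X| ≥ H(Y_1, Y_2), and β·L log₂|X| ≥ H(A) for every single answer A ∈ {X_1, X_2, X_3, Y_1, Y_2}. -/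

import Mathlib

open scoped Classical
open Real

noncomputable section

/-- A probability mass function on a finite sample space. -/
structure FinProb (Ω : Type) [Fintype Ω] where
  p : Ω → ℝ
  nonneg : ∀ ω, 0 ≤ p ω
  sum_one : ∑ ω, p ω = 1

namespace FinProb

variable {Ω : Type} [Fintype Ω]

/-- The probability of an event. -/
def prob (P : FinProb Ω) (E : Ω → Prop) : ℝ :=
  ∑ ω, if E ω then P.p ω else 0

/-- The Shannon entropy (in bits) of a random variable `Z` (with the usual
convention `0 · log 0 = 0`, automatic since `Real.logb 2 0 = 0`). -/
def entH {σ : Type} (P : FinProb Ω) (Z : Ω → σ) : ℝ :=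
  ∑ z ∈ Finset.univ.image Z,
    -(P.prob fun ω => Z ω = z) * Real.logb 2 (P.prob fun ω => Z ω = z)

/-- The conditional Shannon entropy (in bits) `H(Z | C)`. -/
def condH {σ τ : Type} (P : FinProb Ω) (Z : Ω → σ) (C : Ω → τ) : ℝ :=
  P.entH (fun ω => (Z ω, C ω)) - P.entH C

end FinProb

/-- The uniform distribution on a finite nonempty set. -/
def uniformProb (Ω : Type) [Fintype Ω] [Nonempty Ω] : FinProb Ω where
  p _ := (Fintype.card Ω : ℝ)⁻¹
  nonneg _ := by positivity
  sum_one := by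
    rw [Finset.sum_const, Finset.card_univ, nsmul_eq_mul,
      mul_inv_cancel₀ (by exact_mod_cast Fintype.card_ne_zero)]

/-- The sample space of a PIR code: a pair of (message realizations, random key).
The `K` messages each consist of `L` symbols from the alphabet `X`. -/
abbrev PIRSamp (K L : ℕ) (X F : Type) : Type := (Fin K → Fin L → X) × F

/-- The underlying probability distribution of a PIR code: the `K` messages are
mutually independent, each uniform on `X^L`, and the random key is uniform on `F`
and independent of the messages; equivalently, `(W_{1:K}, F)` is uniform. -/
def pirP (K L : ℕ) (X F : Type) [Fintype X] [Nonempty X] [Fintype F] [Nonempty F] :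
    FinProb (PIRSamp K L X F) := uniformProb _

/-- An `N`-database `K`-message private information retrieval code with message length `L`,
message alphabet `X`, answer alphabet `Y`, random-key set `F`, query sets `Q n` and
storage sets `S n`.  The stored content of database `n` is `store n` applied to the messages;
the query to database `n` is `query n k F`; the answer is a string of `len n q` symbols of `Y`
(a deterministic function of the query and the stored content); `correct` states that the
desired message is a deterministic function of the answers and the random key, and `privacy`
states that the query distribution does not depend on the desired message index. -/
structure PIRCode (N K L : ℕ) (X Y F : Type) (Q S : Fin N → Type)
    [Fintype X] [Nonempty X] [Fintype Y] [Fintype F] [Nonempty F]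
    [∀ n, Fintype (Q n)] [∀ n, Fintype (S n)] : Type where
  hN : 0 < N
  hK : 0 < K
  hL : 0 < L
  hX : 2 ≤ Fintype.card X
  store : (n : Fin N) → (Fin K → Fin L → X) → S n
  query : (n : Fin N) → Fin K → F → Q n
  len : (n : Fin N) → Q n → ℕ
  answer : (n : Fin N) → (q : Q n) → S n → (Fin (len n q) → Y)
  correct : ∀ (k : Fin K) (ω ω' : PIRSamp K L X F), ω.2 = ω'.2 →
    (∀ n : Fin N, List.ofFn (answer n (query n k ω.2) (store n ω.1)) =
      List.ofFn (answer n (query n k ω'.2) (store n ω'.1))) →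
    ω.1 k = ω'.1 k
  privacy : ∀ (n : Fin N) (k k' : Fin K) (q : Q n),
    (pirP K L X F).prob (fun ω => query n k ω.2 = q) =
      (pirP K L X F).prob (fun ω => query n k' ω.2 = q)

namespace PIRCode

variable {N K L : ℕ} {X Y F : Type} {Q S : Fin N → Type}
  [Fintype X] [Nonempty X] [Fintype Y] [Fintype F] [Nonempty F]
  [∀ n, Fintype (Q n)] [∀ n, Fintype (S n)]

/-- Message `k` (0-indexed) as a random variable. -/
def Wrv (_c : PIRCode N K L X Y F Q S) (k : Fin K) : PIRSamp K L X F → (Fin L → X) :=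
  fun ω => ω.1 k

/-- The random key as a random variable. -/
def Frv (_c : PIRCode N K L X Y F Q S) : PIRSamp K L X F → F := fun ω => ω.2

/-- The stored content `S_n` as a random variable. -/
def Srv (c : PIRCode N K L X Y F Q S) (n : Fin N) : PIRSamp K L X F → S n :=
  fun ω => c.store n ω.1

/-- The query `Q_n^{[k]}` as a random variable. -/
def Qrv (c : PIRCode N K L X Y F Q S) (n : Fin N) (k : Fin K) : PIRSamp K L X F → Q n :=
  fun ω => c.query n k ω.2

/-- The answer string `A_n^{[k]}` of database `n` when retrieving message `k`. -/
def Arv (c : PIRCode N K L X Y F Q S) (n : Fin N) (k : Fin K) : PIRSamp K L X F → List Y :=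
  fun ω => List.ofFn (c.answer n (c.query n k ω.2) (c.store n ω.1))

/-- The answer string `A_n^{(q)}` of database `n` to the fixed query `q`. -/
def AnsFix (c : PIRCode N K L X Y F Q S) (n : Fin N) (q : Q n) : PIRSamp K L X F → List Y :=
  fun ω => List.ofFn (c.answer n q (c.store n ω.1))

/-- The operational storage cost `α_n = log₂|𝒮_n| / (L log₂|X|)` of database `n`. -/
def alphaN (_c : PIRCode N K L X Y F Q S) (n : Fin N) : ℝ :=
  Real.logb 2 (Fintype.card (S n)) / (L * Real.logb 2 (Fintype.card X))

/-- The average per-node storage cost `α`. -/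
def alphaAvg (c : PIRCode N K L X Y F Q S) : ℝ := (∑ n, c.alphaN n) / N

/-- The expected answer length `E[ℓ_n(Q_n^{[k]})]`. -/
def expLen (c : PIRCode N K L X Y F Q S) (n : Fin N) (k : Fin K) : ℝ :=
  ∑ ω : PIRSamp K L X F, (pirP K L X F).p ω * (c.len n (c.query n k ω.2))

/-- The operational download cost of database `n` for message index `k`:
`E[ℓ_n(Q_n^{[k]})]·log₂|Y| / (L log₂|X|)`. -/
def betaNK (c : PIRCode N K L X Y F Q S) (n : Fin N) (k : Fin K) : ℝ :=
  c.expLen n k * Real.logb 2 (Fintype.card Y) / (L * Real.logb 2 (Fintype.card X))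

/-- The operational download cost `β_n` of database `n` (independent of the retrieved
message index by privacy, hence evaluated at the first message). -/
def betaN (c : PIRCode N K L X Y F Q S) (n : Fin N) : ℝ := c.betaNK n ⟨0, c.hK⟩

/-- The average per-node download cost `β`. -/
def betaAvg (c : PIRCode N K L X Y F Q S) : ℝ := (∑ n, c.betaN n) / N

/-- The informational storage cost `α'_n = H(S_n) / (L log₂|X|)`. -/
def alphaInfoN (c : PIRCode N K L X Y F Q S) (n : Fin N) : ℝ :=
  (pirP K L X F).entH (c.Srv n) / (L * Real.logb 2 (Fintype.card X))

/-- The informational download cost `β'_n = H(A_n^{[k]} | F) / (L log₂|X|)`. -/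
def betaInfoNK (c : PIRCode N K L X Y F Q S) (n : Fin N) (k : Fin K) : ℝ :=
  (pirP K L X F).condH (c.Arv n k) c.Frv / (L * Real.logb 2 (Fintype.card X))

/-- The first `m` messages `W_{1:m}` as a single random variable (messages with
0-indexed position `≥ m` are blanked out by `none`). -/
def WleRv (_c : PIRCode N K L X Y F Q S) (m : ℕ) :
    PIRSamp K L X F → (Fin K → Option (Fin L → X)) :=
  fun ω i => if (i : ℕ) < m then some (ω.1 i) else none

/-- All answers `A_{1:N}^{[k]}` as a single random variable. -/
def AallRv (c : PIRCode N K L X Y F Q S) (k : Fin K) : PIRSamp K L X F → (Fin N → List Y) :=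
  fun ω n => c.Arv n k ω

/-- The answers `A_{1:n-1,n+1:N}^{[k]}` of all databases except database `n`. -/
def AexcRv (c : PIRCode N K L X Y F Q S) (n : Fin N) (k : Fin K) :
    PIRSamp K L X F → (Fin N → Option (List Y)) :=
  fun ω n' => if n' = n then none else some (c.Arv n' k ω)

/-- The stored contents `S_{1:n-1,n+1:N}` of all databases except database `n`. -/
def SexcRv (c : PIRCode N K L X Y F Q S) (n : Fin N) :
    PIRSamp K L X F → ((n' : Fin N) → Option (S n')) :=
  fun ω n' => if n' = n then none else some (c.store n' ω.1)

/-- `T^k = H(A_{1:N}^{[k]} | W_{1:k}, F)`; here `k : Fin K` is the 0-indexed message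
index, corresponding to the paper's message index `k+1`. -/
def T (c : PIRCode N K L X Y F Q S) (k : Fin K) : ℝ :=
  (pirP K L X F).condH (c.AallRv k) (fun ω => (c.WleRv ((k : ℕ) + 1) ω, ω.2))

/-- `V_n^k = H(A_{1:n-1,n+1:N}^{[k]}, S_n | W_{1:k}, F)` (0-indexed `k`, as in `T`). -/
def Vnk (c : PIRCode N K L X Y F Q S) (n : Fin N) (k : Fin K) : ℝ :=
  (pirP K L X F).condH (fun ω => (c.AexcRv n k ω, c.Srv n ω))
    (fun ω => (c.WleRv ((k : ℕ) + 1) ω, ω.2))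

/-- `V^k = (1/N) Σ_n V_n^k`. -/
def Vavg (c : PIRCode N K L X Y F Q S) (k : Fin K) : ℝ := (∑ n, c.Vnk n k) / N

end PIRCode

section Aux

namespace FinProb

variable {Ω : Type} [Fintype Ω] {σ τ : Type}

lemma prob_nonneg (P : FinProb Ω) (E : Ω → Prop) : 0 ≤ P.prob E :=
  Finset.sum_nonneg fun ω _ => by
    by_cases h : E ω <;> simp [h, P.nonneg ω]

lemma prob_mono (P : FinProb Ω) {E E' : Ω → Prop} (h : ∀ ω, E ω → E' ω) :
    P.prob E ≤ P.prob E' :=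
  Finset.sum_le_sum fun ω _ => by
    by_cases hE : E ω
    · rw [if_pos hE, if_pos (h ω hE)]
    · rw [if_neg hE]; by_cases hE' : E' ω <;> simp [hE', P.nonneg ω]

lemma single_le_prob (P : FinProb Ω) {E : Ω → Prop} {ω : Ω} (h : E ω) :
    P.p ω ≤ P.prob E := by
  have := Finset.single_le_sum (f := fun ω' => if E ω' then P.p ω' else 0)
    (fun i _ => by by_cases hE : E i <;> simp [hE, P.nonneg i]) (Finset.mem_univ ω)
  simpa [h, prob] using this

lemma exists_of_prob_pos (P : FinProb Ω) {E : Ω → Prop} (h : 0 < P.prob E) :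
    ∃ ω, E ω := by
  by_contra hc
  push_neg at hc
  have : P.prob E = 0 := Finset.sum_eq_zero fun ω _ => if_neg (hc ω)
  rw [this] at h
  exact lt_irrefl _ h

lemma prob_eq_sum_filter (P : FinProb Ω) (E : Ω → Prop) :
    P.prob E = ∑ ω ∈ Finset.univ.filter E, P.p ω :=
  (Finset.sum_filter _ _).symm

lemma entH_eq_sum (P : FinProb Ω) (Z : Ω → σ) :
    P.entH Z = ∑ ω, -(P.p ω) * Real.logb 2 (P.prob fun ω' => Z ω' = Z ω) := by
  rw [entH]
  refine Finset.sum_image' _ (fun ω _ => ?_)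
  have hval : ∀ j, Z j = Z ω →
      (P.prob fun ω' => Z ω' = Z j) = (P.prob fun ω' => Z ω' = Z ω) := by
    intro j hj; rw [hj]
  calc -(P.prob fun ω' => Z ω' = Z ω) * Real.logb 2 (P.prob fun ω' => Z ω' = Z ω)
      = -(∑ j ∈ Finset.univ.filter (fun j => Z j = Z ω), P.p j)
          * Real.logb 2 (P.prob fun ω' => Z ω' = Z ω) := by
        rw [← prob_eq_sum_filter]
    _ = ∑ j ∈ Finset.univ.filter (fun j => Z j = Z ω),
          -(P.p j) * Real.logb 2 (P.prob fun ω' => Z ω' = Z ω) := by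
        simp only [neg_mul, Finset.sum_neg_distrib, ← Finset.sum_mul]
    _ = ∑ j ∈ Finset.univ.filter (fun j => Z j = Z ω),
          -(P.p j) * Real.logb 2 (P.prob fun ω' => Z ω' = Z j) := by
        refine Finset.sum_congr rfl fun j hj => ?_
        rw [hval j (Finset.mem_filter.mp hj).2]

lemma entH_congr (P : FinProb Ω) (Z : Ω → σ) (C : Ω → τ)
    (h : ∀ ω ω', Z ω = Z ω' ↔ C ω = C ω') : P.entH Z = P.entH C := by
  rw [entH_eq_sum, entH_eq_sum]
  refine Finset.sum_congr rfl fun ω _ => ?_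
  have : (fun ω' => Z ω' = Z ω) = (fun ω' => C ω' = C ω) :=
    funext fun ω' => propext (h ω' ω)
  rw [this]

lemma condH_eq_zero (P : FinProb Ω) (Z : Ω → σ) (C : Ω → τ)
    (h : ∀ ω ω', C ω = C ω' → Z ω = Z ω') : P.condH Z C = 0 := by
  rw [condH, entH_congr P (fun ω => (Z ω, C ω)) C, sub_self]
  intro ω ω'
  constructor
  · intro hp; exact congrArg Prod.snd hp
  · intro hc; exact Prod.ext (h ω ω' hc) hc

lemma entH_mono (P : FinProb Ω) (Z : Ω → σ) (C : Ω → τ)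
    (h : ∀ ω ω', C ω = C ω' → Z ω = Z ω') : P.entH Z ≤ P.entH C := by
  rw [entH_eq_sum, entH_eq_sum]
  refine Finset.sum_le_sum fun ω _ => ?_
  rcases eq_or_lt_of_le (P.nonneg ω) with h0 | h0
  · rw [← h0]; simp
  · have hC : 0 < P.prob fun ω' => C ω' = C ω :=
      lt_of_lt_of_le h0 (single_le_prob P rfl)
    have hZ : P.prob (fun ω' => C ω' = C ω) ≤ P.prob (fun ω' => Z ω' = Z ω) :=
      prob_mono P fun ω' hc => h ω' ω hc
    have hlog := Real.logb_le_logb_of_le (by norm_num : (1:ℝ) < 2) hC hZ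
    exact mul_le_mul_of_nonpos_left hlog (neg_nonpos.mpr h0.le)

lemma sum_prob_image_eq_one (P : FinProb Ω) (Z : Ω → σ) :
    ∑ z ∈ Finset.univ.image Z, (P.prob fun ω => Z ω = z) = 1 := by
  rw [← P.sum_one]
  exact Finset.sum_image' _ (fun ω _ => prob_eq_sum_filter P _)

lemma entH_le_logb_card (P : FinProb Ω) (Z : Ω → σ) :
    P.entH Z ≤ Real.logb 2 ((Finset.univ.image Z).card : ℝ) := by
  classical
  set s := Finset.univ.image Z with hs
  set w : σ → ℝ := fun z => P.prob fun ω => Z ω = z with hw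
  set t := s.filter (fun z => 0 < w z) with ht
  have hwnn : ∀ z, 0 ≤ w z := fun z => prob_nonneg P _
  have hsum_t : ∑ z ∈ t, w z = 1 := by
    rw [ht, Finset.sum_filter_of_ne, hs, sum_prob_image_eq_one]
    intro z _ hz
    exact lt_of_le_of_ne (hwnn z) (Ne.symm hz)
  have hent_t : P.entH Z = ∑ z ∈ t, -(w z) * Real.logb 2 (w z) := by
    rw [entH, ht]
    rw [Finset.sum_filter_of_ne]
    intro z _ hz
    rcases lt_or_eq_of_le (hwnn z) with h | h
    · exact h
    · exfalso; apply hz; rw [← h]; simp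
  have htne : t.Nonempty := by
    by_contra hte
    rw [Finset.not_nonempty_iff_eq_empty] at hte
    rw [hte, Finset.sum_empty] at hsum_t
    norm_num at hsum_t
  have hlog2 : (0:ℝ) < Real.log 2 := Real.log_pos (by norm_num)
  have hjensen : ∑ z ∈ t, w z • Real.log (w z)⁻¹
      ≤ Real.log (∑ z ∈ t, w z • (w z)⁻¹) := by
    refine strictConcaveOn_log_Ioi.concaveOn.le_map_sum
      (fun z _ => hwnn z) hsum_t (fun z hz => ?_)
    have : 0 < w z := (Finset.mem_filter.mp hz).2
    exact Set.mem_Ioi.mpr (inv_pos.mpr this)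
  have hinv : ∑ z ∈ t, w z • (w z)⁻¹ = (t.card : ℝ) := by
    rw [Finset.sum_congr rfl (fun z hz => show w z • (w z)⁻¹ = (1:ℝ) from by
      rw [smul_eq_mul, mul_inv_cancel₀ ((Finset.mem_filter.mp hz).2).ne'])]
    simp
  have hstep : ∑ z ∈ t, -(w z) * Real.logb 2 (w z)
      = (∑ z ∈ t, w z • Real.log (w z)⁻¹) / Real.log 2 := by
    rw [Finset.sum_div]
    refine Finset.sum_congr rfl fun z _ => ?_
    rw [smul_eq_mul, Real.log_inv, Real.logb]
    ring
  have hjensen2 : ∑ z ∈ t, w z • Real.log (w z)⁻¹ ≤ Real.log (t.card : ℝ) := by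
    rw [← hinv]; exact hjensen
  have hmain : P.entH Z ≤ Real.logb 2 (t.card : ℝ) := by
    rw [hent_t, hstep, Real.logb]
    exact div_le_div_of_nonneg_right hjensen2 hlog2.le
  refine hmain.trans ?_
  have hcard : (t.card : ℝ) ≤ (s.card : ℝ) := by
    exact_mod_cast Finset.card_le_card (Finset.filter_subset _ _)
  have htpos : (0:ℝ) < (t.card : ℝ) := by
    exact_mod_cast Finset.card_pos.mpr htne
  exact Real.logb_le_logb_of_le (by norm_num : (1:ℝ) < 2) htpos hcard

lemma entH_le_logb [inst : DecidableEq σ] (P : FinProb Ω) (Z : Ω → σ) {m : ℕ}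
    (hm : (Finset.univ.image Z).card ≤ m) (hΩ : Nonempty Ω) :
    P.entH Z ≤ Real.logb 2 (m : ℝ) := by
  have hEq : ∀ (i1 i2 : DecidableEq σ),
      @Finset.image Ω σ i1 Z Finset.univ = @Finset.image Ω σ i2 Z Finset.univ := by
    intro i1 i2
    ext x
    simp [Finset.mem_image]
  refine (entH_le_logb_card P Z).trans ?_
  rw [hEq _ inst]
  have hpos : (0:ℝ) < ((Finset.univ.image Z).card : ℝ) := by
    have : (Finset.univ.image Z).Nonempty :=
      (Finset.univ_nonempty (α := Ω)).image Z
    exact_mod_cast Finset.card_pos.mpr this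
  exact Real.logb_le_logb_of_le (by norm_num : (1:ℝ) < 2) hpos (by exact_mod_cast hm)

end FinProb

end Aux

/-- For any 2-database 2-message PIR code satisfying the symmetry relations, there exist
fixed-query answers X₁ = A₁^{(q)}, X₂, X₃ (deterministic functions of S₁) and Y₁, Y₂
(deterministic functions of S₂) with the four decoding conditions, which are together a
deterministic function of (W₁, W₂), and such that α·L log₂|X| bounds H(X₁,X₂,X₃) and
H(Y₁,Y₂), while β·L log₂|X| bounds each single-answer entropy. -/
theorem two_database_answer_structure
    {L : ℕ} {X Y F : Type} {Q S : Fin 2 → Type}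
    [Fintype X] [Nonempty X] [Fintype Y] [Fintype F] [Nonempty F]
    [∀ n, Fintype (Q n)] [∀ n, Fintype (S n)]
    (c : PIRCode 2 2 L X Y F Q S)
    (hsymS : ∀ n n' : Fin 2, (pirP 2 L X F).entH (c.Srv n) = (pirP 2 L X F).entH (c.Srv n'))
    (hsymA : ∀ (n n' : Fin 2) (q : Q n) (q' : Q n'),
      (pirP 2 L X F).entH (c.AnsFix n q) = (pirP 2 L X F).entH (c.AnsFix n' q'))
    (hsymAW : ∀ (n n' : Fin 2) (q : Q n) (q' : Q n') (k k' : Fin 2),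
      (pirP 2 L X F).entH (fun ω => (c.AnsFix n q ω, c.Wrv k ω))
        = (pirP 2 L X F).entH (fun ω => (c.AnsFix n' q' ω, c.Wrv k' ω)))
    (hsymB : ∀ n : Fin 2, c.betaAvg = c.betaN n) :
    ∃ (qa qb qc : Q 0) (qd qe : Q 1),
      (pirP 2 L X F).condH (c.Wrv 0)
          (fun ω => (c.AnsFix 0 qa ω, c.AnsFix 1 qd ω)) = 0 ∧
      (pirP 2 L X F).condH (c.Wrv 1)
          (fun ω => (c.AnsFix 0 qa ω, c.AnsFix 1 qe ω)) = 0 ∧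
      (pirP 2 L X F).condH (c.Wrv 1)
          (fun ω => (c.AnsFix 0 qb ω, c.AnsFix 1 qd ω)) = 0 ∧
      (pirP 2 L X F).condH (c.Wrv 0)
          (fun ω => (c.AnsFix 0 qc ω, c.AnsFix 1 qe ω)) = 0 ∧
      (pirP 2 L X F).condH
          (fun ω => (c.AnsFix 0 qa ω, c.AnsFix 0 qb ω, c.AnsFix 0 qc ω,
            c.AnsFix 1 qd ω, c.AnsFix 1 qe ω))
          (fun ω => (c.Wrv 0 ω, c.Wrv 1 ω)) = 0 ∧
      c.alphaAvg * (L * Real.logb 2 (Fintype.card X))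
        ≥ (pirP 2 L X F).entH
            (fun ω => (c.AnsFix 0 qa ω, c.AnsFix 0 qb ω, c.AnsFix 0 qc ω)) ∧
      c.alphaAvg * (L * Real.logb 2 (Fintype.card X))
        ≥ (pirP 2 L X F).entH (fun ω => (c.AnsFix 1 qd ω, c.AnsFix 1 qe ω)) ∧
      c.betaAvg * (L * Real.logb 2 (Fintype.card X)) ≥ (pirP 2 L X F).entH (c.AnsFix 0 qa) ∧
      c.betaAvg * (L * Real.logb 2 (Fintype.card X)) ≥ (pirP 2 L X F).entH (c.AnsFix 0 qb) ∧
      c.betaAvg * (L * Real.logb 2 (Fintype.card X)) ≥ (pirP 2 L X F).entH (c.AnsFix 0 qc) ∧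
      c.betaAvg * (L * Real.logb 2 (Fintype.card X)) ≥ (pirP 2 L X F).entH (c.AnsFix 1 qd) ∧
      c.betaAvg * (L * Real.logb 2 (Fintype.card X)) ≥ (pirP 2 L X F).entH (c.AnsFix 1 qe) := by
  have hΩ : Nonempty (PIRSamp 2 L X F) := inferInstance
  have hppos : ∀ ω : PIRSamp 2 L X F, 0 < (pirP 2 L X F).p ω := by
    intro ω
    show (0:ℝ) < (Fintype.card (PIRSamp 2 L X F) : ℝ)⁻¹
    exact inv_pos.mpr (by exact_mod_cast Fintype.card_pos)
  have hswap : ∀ (n k k' : Fin 2) (f : F), ∃ f', c.query n k' f' = c.query n k f := by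
    intro n k k' f
    have hpos : 0 < (pirP 2 L X F).prob (fun ω => c.query n k' ω.2 = c.query n k f) := by
      rw [c.privacy n k' k (c.query n k f)]
      exact lt_of_lt_of_le (hppos (Classical.arbitrary _, f))
        (FinProb.single_le_prob _ rfl)
    obtain ⟨ω, hω⟩ := FinProb.exists_of_prob_pos _ hpos
    exact ⟨ω.2, hω⟩
  obtain ⟨f1⟩ : Nonempty F := inferInstance
  set qa := c.query 0 0 f1 with hqa
  set qd := c.query 1 0 f1 with hqd
  obtain ⟨f2, hf2⟩ := hswap 0 0 1 f1
  set qe := c.query 1 1 f2 with hqe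
  obtain ⟨f3, hf3⟩ := hswap 1 0 1 f1
  set qb := c.query 0 1 f3 with hqb
  obtain ⟨f4, hf4⟩ := hswap 1 1 0 f2
  set qc := c.query 0 0 f4 with hqc
  have hdec : ∀ (k : Fin 2) (f : F) (q0 : Q 0) (q1 : Q 1),
      c.query 0 k f = q0 → c.query 1 k f = q1 →
      (pirP 2 L X F).condH (c.Wrv k)
        (fun ω => (c.AnsFix 0 q0 ω, c.AnsFix 1 q1 ω)) = 0 := by
    intro k f q0 q1 h0 h1
    apply FinProb.condH_eq_zero
    intro ω ω' h
    refine c.correct k (ω.1, f) (ω'.1, f) rfl ?_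
    intro n
    fin_cases n
    · have hh := congrArg Prod.fst h
      simp only [PIRCode.AnsFix] at hh
      rw [← h0] at hh
      exact hh
    · have hh := congrArg Prod.snd h
      simp only [PIRCode.AnsFix] at hh
      rw [← h1] at hh
      exact hh
  have hD : (0:ℝ) < (L : ℝ) * Real.logb 2 (Fintype.card X) := by
    have h1 : (1:ℝ) ≤ Real.logb 2 (Fintype.card X) := by
      have h2 := Real.logb_le_logb_of_le (by norm_num : (1:ℝ) < 2)
        (by norm_num : (0:ℝ) < 2)
        (by exact_mod_cast c.hX : (2:ℝ) ≤ (Fintype.card X : ℝ))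
      rwa [Real.logb_self_eq_one (by norm_num : (1:ℝ) < 2)] at h2
    have hL : (0:ℝ) < L := by exact_mod_cast c.hL
    nlinarith
  have hαval : c.alphaAvg * ((L:ℝ) * Real.logb 2 (Fintype.card X))
      = (Real.logb 2 (Fintype.card (S 0)) + Real.logb 2 (Fintype.card (S 1))) / 2 := by
    rw [PIRCode.alphaAvg, Fin.sum_univ_two, PIRCode.alphaN, PIRCode.alphaN]
    field_simp
    have hLl : (L:ℝ) * Real.logb 2 (Fintype.card X) * (L:ℝ)⁻¹ * (Real.logb 2 (Fintype.card X))⁻¹ = 1 := by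
      rw [show (L:ℝ) * Real.logb 2 (Fintype.card X) * (L:ℝ)⁻¹ * (Real.logb 2 (Fintype.card X))⁻¹
        = ((L:ℝ) * Real.logb 2 (Fintype.card X)) * ((L:ℝ) * Real.logb 2 (Fintype.card X))⁻¹ by ring]
      exact mul_inv_cancel₀ hD.ne'
    linear_combination (Real.logb 2 (Fintype.card (S 0)) * 2 + Real.logb 2 (Fintype.card (S 1)) * 2) * hLl
  have hSle : ∀ n : Fin 2,
      (pirP 2 L X F).entH (c.Srv n) ≤ Real.logb 2 (Fintype.card (S n)) := by
    intro n
    refine FinProb.entH_le_logb _ _ ?_ hΩ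
    exact Finset.card_le_univ _
  have hβ : ∀ (n : Fin 2) (q : Q n),
      (pirP 2 L X F).entH (c.AnsFix n q)
        ≤ c.betaAvg * ((L:ℝ) * Real.logb 2 (Fintype.card X)) := by
    intro n q
    have hBD : c.betaAvg * ((L:ℝ) * Real.logb 2 (Fintype.card X))
        = c.expLen n ⟨0, c.hK⟩ * Real.logb 2 (Fintype.card Y) := by
      rw [hsymB n, PIRCode.betaN, PIRCode.betaNK]
      field_simp
      rw [mul_assoc (c.expLen n ⟨0, c.hK⟩ * _), mul_div_cancel_right₀ _ hD.ne']
    rw [hBD]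
    calc (pirP 2 L X F).entH (c.AnsFix n q)
        = ∑ ω : PIRSamp 2 L X F,
            (pirP 2 L X F).p ω * (pirP 2 L X F).entH (c.AnsFix n q) := by
          rw [← Finset.sum_mul, (pirP 2 L X F).sum_one, one_mul]
      _ ≤ ∑ ω : PIRSamp 2 L X F, (pirP 2 L X F).p ω *
            ((c.len n (c.query n ⟨0, c.hK⟩ ω.2) : ℝ) * Real.logb 2 (Fintype.card Y)) := by
          refine Finset.sum_le_sum fun ω _ => ?_
          refine mul_le_mul_of_nonneg_left ?_ ((pirP 2 L X F).nonneg ω)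
          set q' := c.query n ⟨0, c.hK⟩ ω.2 with hq'
          rw [hsymA n n q q']
          have hsub : Finset.univ.image (c.AnsFix n q') ⊆
              Finset.univ.image (fun g : Fin (c.len n q') → Y => List.ofFn g) := by
            intro l hl
            rw [Finset.mem_image] at hl ⊢
            obtain ⟨ω0, _, rfl⟩ := hl
            exact ⟨c.answer n q' (c.store n ω0.1), Finset.mem_univ _, rfl⟩
          have hcard : (Finset.univ.image (c.AnsFix n q')).card
              ≤ Fintype.card Y ^ (c.len n q') :=
            (Finset.card_le_card hsub).trans (Finset.card_image_le.trans
              (by simp [Fintype.card_fun]))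
          have hle := FinProb.entH_le_logb (pirP 2 L X F) (c.AnsFix n q') hcard hΩ
          push_cast at hle
          rwa [Real.logb_pow] at hle
      _ = c.expLen n ⟨0, c.hK⟩ * Real.logb 2 (Fintype.card Y) := by
          rw [PIRCode.expLen, Finset.sum_mul]
          exact Finset.sum_congr rfl fun ω _ => by ring
  have hXtriple : (pirP 2 L X F).entH
      (fun ω => (c.AnsFix 0 qa ω, c.AnsFix 0 qb ω, c.AnsFix 0 qc ω))
      ≤ (pirP 2 L X F).entH (c.Srv 0) := by
    apply FinProb.entH_mono
    intro ω ω' h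
    have hst : c.store 0 ω.1 = c.store 0 ω'.1 := h
    simp [PIRCode.AnsFix, hst]
  have hYpair : (pirP 2 L X F).entH
      (fun ω => (c.AnsFix 1 qd ω, c.AnsFix 1 qe ω))
      ≤ (pirP 2 L X F).entH (c.Srv 1) := by
    apply FinProb.entH_mono
    intro ω ω' h
    have hst : c.store 1 ω.1 = c.store 1 ω'.1 := h
    simp [PIRCode.AnsFix, hst]
  refine ⟨qa, qb, qc, qd, qe, ?_, ?_, ?_, ?_, ?_, ?_, ?_, ?_, ?_, ?_, ?_, ?_⟩
  · exact hdec 0 f1 qa qd rfl rfl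
  · exact hdec 1 f2 qa qe hf2 rfl
  · exact hdec 1 f3 qb qd rfl hf3
  · exact hdec 0 f4 qc qe rfl hf4
  · apply FinProb.condH_eq_zero
    intro ω ω' h
    have h1 : ω.1 = ω'.1 := by
      funext i
      fin_cases i
      · exact congrArg Prod.fst h
      · exact congrArg Prod.snd h
    simp [PIRCode.AnsFix, h1]
  · rw [ge_iff_le, hαval]
    have h01 := hsymS 0 1
    linarith [hXtriple, hSle 0, hSle 1]
  · rw [ge_iff_le, hαval]
    have h10 := hsymS 1 0
    linarith [hYpair, hSle 0, hSle 1]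
  · exact hβ 0 qa
  · exact hβ 0 qb
  · exact hβ 0 qc
  · exact hβ 1 qd
  · exact hβ 1 qe
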